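/- Let $\Theta\subset\mathbb{R}^p$ be compact and suppose $D_n(\theta) := \frac{1}{n}\sum_{i=1}^n d_i(\theta)^2 \to D(\theta)$ uniformly on $\Theta$, where each $d_i$ is continuous and $D$ is continuous. Let $(\epsilon_i)$ be i.i.d. with mean $0$, variance $\sigma^2$, and finite fourth moment, and suppose $\limsup_n \frac1n\sum_{i=1}^n \sup_{\theta\in\Theta} d_i(\theta)^4 < \infty$. Then for each fixed $\theta$, $\frac{1}{n}\sum_{i=1}^n (\epsilon_i - d_i(\theta))^2 \to \sigma^2 + D(\theta)$ almost surely. -/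

import Mathlib

/-!
Expand `(εᵢ - dᵢ(θ))² = εᵢ² - 2 dᵢ(θ) εᵢ + dᵢ(θ)²`. The average of the `εᵢ²` tends to `σ²` by the
strong law, and the average of the `dᵢ(θ)²` tends to `D θ`. For the cross term, independence and
centring give `E (∑ aᵢ εᵢ)⁴ ≤ (E ε⁴ + 3 σ⁴) (∑ aᵢ²)²`, which is `O(n²)` because the Cesàro means of
`aᵢ² = dᵢ(θ)²` converge. Hence `E (n⁻¹ ∑ aᵢ εᵢ)⁴ = O(n⁻²)` is summable, and the weighted average
tends to `0` almost surely.
-/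

open MeasureTheory ProbabilityTheory Filter Finset
open scoped ProbabilityTheory ENNReal Topology

lemma tendsto_zero_of_tendsto_pow_zero {α : Type*} {l : Filter α} {f : α → ℝ} {k : ℕ}
    (hk : k ≠ 0) (h : Tendsto (fun x => f x ^ k) l (𝓝 0)) : Tendsto f l (𝓝 0) := by
  have hroot := ((Real.continuous_rpow_const (inv_nonneg.2 k.cast_nonneg)).tendsto 0).comp
    (tendsto_norm_zero.comp h)
  rw [Real.zero_rpow (inv_ne_zero (Nat.cast_ne_zero.2 hk))] at hroot
  refine tendsto_zero_iff_norm_tendsto_zero.2 (hroot.congr fun x => ?_)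
  simpa using Real.pow_rpow_inv_natCast (abs_nonneg (f x)) hk

namespace MeasureTheory

variable {Ω : Type*} {mΩ : MeasurableSpace Ω} {μ : Measure Ω}

lemma MemLp.integrable_pow [IsFiniteMeasure μ] {f : Ω → ℝ} {p k : ℕ} (hf : MemLp f p μ)
    (hk : k ≤ p) : Integrable (fun ω => f ω ^ k) μ := by
  have hk' : (k : ℝ≥0∞) ≤ p := by exact_mod_cast hk
  refine (integrable_norm_iff (hf.aestronglyMeasurable.pow k)).1 ?_
  simpa [norm_pow] using (hf.mono_exponent hk').integrable_norm_pow'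

lemma ae_tendsto_zero_of_summable_integral_norm {E : Type*} [NormedAddCommGroup E]
    {Y : ℕ → Ω → E} (hint : ∀ n, Integrable (Y n) μ)
    (hsum : Summable fun n => ∫ ω, ‖Y n ω‖ ∂μ) :
    ∀ᵐ ω ∂μ, Tendsto (fun n => Y n ω) atTop (𝓝 0) := by
  have hmeas : ∀ n, AEMeasurable (fun ω => ‖Y n ω‖ₑ) μ := fun n => (hint n).1.enorm
  have hfin : ∫⁻ ω, ∑' n, ‖Y n ω‖ₑ ∂μ ≠ ∞ := by
    simp_rw [lintegral_tsum hmeas, ← ofReal_integral_norm_eq_lintegral_enorm (hint _),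
      ← ENNReal.ofReal_tsum_of_nonneg (fun n => integral_nonneg fun _ => norm_nonneg _) hsum]
    exact ENNReal.ofReal_ne_top
  filter_upwards [ae_lt_top' (AEMeasurable.tsum hmeas) hfin] with ω hω
  exact tendsto_zero_iff_enorm_tendsto_zero.2 (ENNReal.tendsto_atTop_zero_of_tsum_ne_top hω.ne)

end MeasureTheory

namespace ProbabilityTheory

variable {Ω : Type*} {mΩ : MeasurableSpace Ω} {μ : Measure Ω}

lemma IndepFun.integral_add_pow [IsFiniteMeasure μ] {S Z : Ω → ℝ} (h : IndepFun S Z μ) {n : ℕ}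
    (hS : MemLp S n μ) (hZ : MemLp Z n μ) :
    ∫ ω, (S ω + Z ω) ^ n ∂μ =
      ∑ k ∈ range (n + 1), (∫ ω, S ω ^ k ∂μ) * (∫ ω, Z ω ^ (n - k) ∂μ) * n.choose k := by
  have hterm : ∀ k, IndepFun (fun ω => S ω ^ k) (fun ω => Z ω ^ (n - k)) μ := fun k =>
    h.comp (measurable_id.pow_const k) (measurable_id.pow_const (n - k))
  have hint : ∀ k ≤ n, Integrable (fun ω => S ω ^ k * Z ω ^ (n - k)) μ := fun k hk =>
    (hterm k).integrable_mul (hS.integrable_pow hk) (hZ.integrable_pow (n.sub_le k))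
  simp_rw [add_pow]
  rw [integral_finsetSum _ fun k hk => (hint k (Nat.lt_succ_iff.1 (mem_range.1 hk))).mul_const _]
  refine sum_congr rfl fun k _ => ?_
  rw [integral_mul_const, (hterm k).integral_fun_mul_eq_mul_integral
    (hS.aestronglyMeasurable.pow k) (hZ.aestronglyMeasurable.pow _)]

variable [IsProbabilityMeasure μ]

lemma IndepFun.integral_add_sq {S Z : Ω → ℝ} (h : IndepFun S Z μ) (hS : MemLp S 2 μ)
    (hZ : MemLp Z 2 μ) (hZ0 : μ[Z] = 0) :
    ∫ ω, (S ω + Z ω) ^ 2 ∂μ = ∫ ω, S ω ^ 2 ∂μ + ∫ ω, Z ω ^ 2 ∂μ := by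
  rw [h.integral_add_pow hS hZ]
  simp [sum_range_succ, hZ0, add_comm]

lemma IndepFun.integral_add_pow_four {S Z : Ω → ℝ} (h : IndepFun S Z μ) (hS : MemLp S 4 μ)
    (hZ : MemLp Z 4 μ) (hS0 : μ[S] = 0) (hZ0 : μ[Z] = 0) :
    ∫ ω, (S ω + Z ω) ^ 4 ∂μ =
      ∫ ω, S ω ^ 4 ∂μ + 6 * (∫ ω, S ω ^ 2 ∂μ) * (∫ ω, Z ω ^ 2 ∂μ) + ∫ ω, Z ω ^ 4 ∂μ := by
  rw [h.integral_add_pow hS hZ]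
  simp only [Nat.reduceAdd, sum_range_succ, range_one, sum_singleton, pow_zero, integral_const,
    probReal_univ, smul_eq_mul, mul_one, tsub_zero, one_mul, Nat.choose, Nat.cast_one, pow_one, hS0,
    Nat.add_one_sub_one, zero_mul, add_zero, Nat.cast_ofNat, Nat.reduceSub, hZ0, mul_zero, tsub_self]
  ring

section

variable {X : ℕ → Ω → ℝ}

lemma iIndepFun.integral_sum_sq (hX : iIndepFun X μ) (hL : ∀ i, MemLp (X i) 2 μ)
    (h0 : ∀ i, μ[X i] = 0) (n : ℕ) :
    ∫ ω, (∑ i ∈ range n, X i ω) ^ 2 ∂μ = ∑ i ∈ range n, ∫ ω, X i ω ^ 2 ∂μ := by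
  induction n with
  | zero => simp
  | succ n ih =>
    have hindep : IndepFun (fun ω => ∑ i ∈ range n, X i ω) (X n) μ := by
      simpa only [← Finset.sum_fn] using
        hX.indepFun_sum_range_succ₀ (fun i => (hL i).aemeasurable) n
    simp_rw [sum_range_succ]
    rw [hindep.integral_add_sq (memLp_finsetSum _ fun i _ => hL i) (hL n) (h0 n), ih]

lemma iIndepFun.integral_sum_pow_four_le (hX : iIndepFun X μ) (hL : ∀ i, MemLp (X i) 4 μ)
    (h0 : ∀ i, μ[X i] = 0) (n : ℕ) :
    ∫ ω, (∑ i ∈ range n, X i ω) ^ 4 ∂μ ≤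
      ∑ i ∈ range n, ∫ ω, X i ω ^ 4 ∂μ + 3 * (∑ i ∈ range n, ∫ ω, X i ω ^ 2 ∂μ) ^ 2 := by
  have hL2 : ∀ i, MemLp (X i) 2 μ := fun i => (hL i).mono_exponent (by norm_num)
  induction n with
  | zero => simp
  | succ n ih =>
    have hindep : IndepFun (fun ω => ∑ i ∈ range n, X i ω) (X n) μ := by
      simpa only [← Finset.sum_fn] using
        hX.indepFun_sum_range_succ₀ (fun i => (hL i).aemeasurable) n
    have hmean : μ[fun ω => ∑ i ∈ range n, X i ω] = 0 := by
      rw [integral_finsetSum _ fun i _ => (hL i).integrable (by norm_num)]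
      exact sum_eq_zero fun i _ => h0 i
    have hvar_nonneg : 0 ≤ ∫ ω, X n ω ^ 2 ∂μ := integral_nonneg fun ω => sq_nonneg _
    simp_rw [sum_range_succ]
    rw [hindep.integral_add_pow_four (memLp_finsetSum _ fun i _ => hL i) (hL n) hmean (h0 n),
      hX.integral_sum_sq hL2 h0]
    nlinarith [mul_nonneg hvar_nonneg hvar_nonneg]

end

theorem ae_tendsto_weighted_average_zero {ε : ℕ → Ω → ℝ} (hindep : iIndepFun ε μ)
    (hid : ∀ i, IdentDistrib (ε i) (ε 0) μ μ) (hmean : μ[ε 0] = 0) (h4 : MemLp (ε 0) 4 μ)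
    {a : ℕ → ℝ}
    (ha : IsBoundedUnder (· ≤ ·) atTop fun n : ℕ => (n : ℝ)⁻¹ * ∑ i ∈ range n, a i ^ 2) :
    ∀ᵐ ω ∂μ, Tendsto (fun n : ℕ => (n : ℝ)⁻¹ * ∑ i ∈ range n, a i * ε i ω) atTop (𝓝 0) := by
  obtain ⟨K, hK⟩ := ha.eventually_le
  set C := ∫ ω, ε 0 ω ^ 4 ∂μ + 3 * (∫ ω, ε 0 ω ^ 2 ∂μ) ^ 2
  have hL : ∀ i, MemLp (fun ω => a i * ε i ω) 4 μ := fun i =>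
    ((hid i).symm.memLp_snd h4).const_mul (a i)
  have hpow : ∀ i k, ∫ ω, (a i * ε i ω) ^ k ∂μ = a i ^ k * ∫ ω, ε 0 ω ^ k ∂μ := fun i k => by
    simp_rw [mul_pow]
    rw [integral_const_mul]
    congr 1
    exact ((hid i).comp (measurable_id.pow_const k)).integral_eq
  have hmoment : ∀ n, ∫ ω, (∑ i ∈ range n, a i * ε i ω) ^ 4 ∂μ ≤
      C * (∑ i ∈ range n, a i ^ 2) ^ 2 := fun n => by
    have hX := iIndepFun.integral_sum_pow_four_le (X := fun i ω => a i * ε i ω)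
      (hindep.comp _ fun i => measurable_const_mul (a i)) hL
      (fun i => by simpa [hmean] using hpow i 1) n
    have hfourth : ∑ i ∈ range n, a i ^ 4 ≤ (∑ i ∈ range n, a i ^ 2) ^ 2 := by
      simpa [← pow_mul] using sum_sq_le_sq_sum_of_nonneg fun i _ => sq_nonneg (a i)
    rw [sum_congr rfl fun i _ => hpow i 4, sum_congr rfl fun i _ => hpow i 2, ← sum_mul,
      ← sum_mul] at hX
    have hC4 : 0 ≤ ∫ ω, ε 0 ω ^ 4 ∂μ := integral_nonneg fun ω => by positivity
    nlinarith [mul_le_mul_of_nonneg_left hfourth hC4]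
  have hint : ∀ n : ℕ, Integrable (fun ω => ((n : ℝ)⁻¹ * ∑ i ∈ range n, a i * ε i ω) ^ 4) μ :=
    fun n => ((memLp_finsetSum _ fun i _ => hL i).const_mul _).integrable_pow le_rfl
  have hsum : Summable fun n : ℕ =>
      ∫ ω, ‖((n : ℝ)⁻¹ * ∑ i ∈ range n, a i * ε i ω) ^ 4‖ ∂μ := by
    refine ((Real.summable_nat_pow_inv.2 one_lt_two).mul_left (C * K ^ 2)
      ).of_norm_bounded_eventually_nat ?_
    filter_upwards [hK] with n hn
    have hA : 0 ≤ (n : ℝ)⁻¹ * ∑ i ∈ range n, a i ^ 2 := by positivity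
    calc ‖∫ ω, ‖((n : ℝ)⁻¹ * ∑ i ∈ range n, a i * ε i ω) ^ 4‖ ∂μ‖
        = ∫ ω, ((n : ℝ)⁻¹ * ∑ i ∈ range n, a i * ε i ω) ^ 4 ∂μ := by
          rw [Real.norm_of_nonneg (integral_nonneg fun _ => norm_nonneg _)]
          exact integral_congr_ae (ae_of_all _ fun ω => Real.norm_of_nonneg (by positivity))
      _ = (n : ℝ)⁻¹ ^ 4 * ∫ ω, (∑ i ∈ range n, a i * ε i ω) ^ 4 ∂μ := by
          simp_rw [mul_pow]
          exact integral_const_mul _ _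
      _ ≤ (n : ℝ)⁻¹ ^ 4 * (C * (∑ i ∈ range n, a i ^ 2) ^ 2) := by
          gcongr
          exact hmoment n
      _ = C * ((n : ℝ)⁻¹ * ∑ i ∈ range n, a i ^ 2) ^ 2 * ((n : ℝ) ^ 2)⁻¹ := by ring
      _ ≤ C * K ^ 2 * ((n : ℝ) ^ 2)⁻¹ := by gcongr
  filter_upwards [ae_tendsto_zero_of_summable_integral_norm hint hsum] with ω hω
  exact tendsto_zero_of_tendsto_pow_zero four_ne_zero hω

end ProbabilityTheory

theorem stmt9_general {Ω : Type*} [MeasureSpace Ω] [IsProbabilityMeasure (ℙ : Measure Ω)]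
    {p : ℕ} (Θ : Set (Fin p → ℝ))
    (d : ℕ → (Fin p → ℝ) → ℝ)
    (D : (Fin p → ℝ) → ℝ)
    (hunif : TendstoUniformlyOn
      (fun (n : ℕ) (θ : Fin p → ℝ) => (n : ℝ)⁻¹ * ∑ i ∈ range n, (d i θ) ^ 2)
      D atTop Θ)
    (ε : ℕ → Ω → ℝ) (σ : ℝ)
    (hεindep : iIndepFun ε ℙ)
    (hεid : ∀ i, IdentDistrib (ε i) (ε 0) ℙ ℙ)
    (hεmean : ∫ ω, ε 0 ω = 0)
    (hεvar : ∫ ω, (ε 0 ω) ^ 2 = σ ^ 2)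
    (hε4 : MemLp (ε 0) 4 ℙ) :
    ∀ θ ∈ Θ, ∀ᵐ ω ∂(ℙ : Measure Ω),
      Tendsto (fun (n : ℕ) => (n : ℝ)⁻¹ * ∑ i ∈ range n, (ε i ω - d i θ) ^ 2)
        atTop (nhds (σ ^ 2 + D θ)) := by
  intro θ hθ
  have hdet : Tendsto (fun n : ℕ => (n : ℝ)⁻¹ * ∑ i ∈ range n, d i θ ^ 2) atTop (𝓝 (D θ)) :=
    hunif.tendsto_at hθ
  have hnoise : ∀ᵐ ω, Tendsto (fun n : ℕ => (n : ℝ)⁻¹ * ∑ i ∈ range n, ε i ω ^ 2) atTop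
      (𝓝 (σ ^ 2)) := by
    simpa [hεvar, div_eq_inv_mul] using strong_law_ae_real (fun i ω => ε i ω ^ 2)
      (hε4.mono_exponent (by norm_num)).integrable_sq
      (fun i j hij => (hεindep.indepFun hij).comp (measurable_id.pow_const 2)
        (measurable_id.pow_const 2))
      (fun i => (hεid i).comp (measurable_id.pow_const 2))
  have hcross := ae_tendsto_weighted_average_zero hεindep hεid hεmean hε4 hdet.isBoundedUnder_le
  filter_upwards [hnoise, hcross] with ω hε2 hdε
  convert (hε2.sub (hdε.const_mul 2)).add hdet using 2 with n
  · simp only [mul_sum, ← sum_sub_distrib, ← sum_add_distrib]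
    exact sum_congr rfl fun i _ => by ring
  · ring

/-- if `D_n(θ) = n⁻¹ ∑ d_i(θ)² → D(θ)` uniformly on a compact
`Θ`, the errors are i.i.d. with mean 0, variance σ² and finite fourth moment,
and the fourth powers of `sup_θ |d_i|` are Cesàro bounded, then for each fixed
`θ ∈ Θ`, `n⁻¹ ∑ (ε_i - d_i(θ))² → σ² + D(θ)` almost surely. -/
theorem stmt9 {Ω : Type*} [MeasureSpace Ω] [IsProbabilityMeasure (ℙ : Measure Ω)]
    {p : ℕ} (Θ : Set (Fin p → ℝ)) (hΘ : IsCompact Θ)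
    (d : ℕ → (Fin p → ℝ) → ℝ) (hdcont : ∀ i, ContinuousOn (d i) Θ)
    (D : (Fin p → ℝ) → ℝ) (hDcont : ContinuousOn D Θ)
    (hunif : TendstoUniformlyOn
      (fun (n : ℕ) (θ : Fin p → ℝ) => (n : ℝ)⁻¹ * ∑ i ∈ range n, (d i θ) ^ 2)
      D atTop Θ)
    (ε : ℕ → Ω → ℝ) (σ : ℝ)
    (hεmeas : ∀ i, Measurable (ε i))
    (hεindep : iIndepFun ε ℙ)
    (hεid : ∀ i, IdentDistrib (ε i) (ε 0) ℙ ℙ)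
    (hεmean : ∫ ω, ε 0 ω = 0)
    (hεvar : ∫ ω, (ε 0 ω) ^ 2 = σ ^ 2)
    (hε4 : MemLp (ε 0) 4 ℙ)
    (Md : ℝ)
    (hd4 : ∀ᶠ (n : ℕ) in atTop,
      (n : ℝ)⁻¹ * ∑ i ∈ range n, (⨆ θ : Θ, (d i (θ : Fin p → ℝ)) ^ 4) ≤ Md) :
    ∀ θ ∈ Θ, ∀ᵐ ω ∂(ℙ : Measure Ω),
      Tendsto (fun (n : ℕ) => (n : ℝ)⁻¹ * ∑ i ∈ range n, (ε i ω - d i θ) ^ 2)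
        atTop (nhds (σ ^ 2 + D θ)) :=
  stmt9_general Θ d D hunif ε σ hεindep hεid hεmean hεvar hε4
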